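/- Let T_A, T_D be n×n row-stochastic matrices with all entries of T_A at least t_a* > 0 and all of T_D at least t_d* > 0. Let α₁,…,αₙ ≥ 0 with α_sum > 0 and α_max = maxⱼ αⱼ. Define τ_A(b) = T_Aᵀ·cond(b) and τ_D(b) = T_Dᵀ·cond(b) where cond(b)ⱼ = αⱼbⱼ/(Σᵢαᵢbᵢ). Then for probability vectors b₁ with entries ≥ t_a* and b₂ with entries ≥ t_d*: ‖τ_A(b₁) − τ_D(b₂)‖₁ ≤ ‖(T_A − T_D)ᵀ‖₁ + ((1 − n·t_max)·α_max/(t_min·α_sum))·‖b₁ − b₂‖₁, where t_max = max(t_a*, t_d*), t_min = min(t_a*, t_d*). -/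

import Mathlib

/-!
Write `c = cond(b₁)` and `d = cond(b₂)`; both are probability vectors. If, say, `t_d* ≤ t_a*`, split
`T_Aᵀ c - T_Dᵀ d = (T_A - T_D)ᵀ d + T_Aᵀ (c - d)`. The first term has L1 norm at most the largest
row sum of `|T_A - T_D|` because `d` is a probability vector. For the second, `c - d` sums to zero,
so `T_A` may be replaced by `T_A - t_a*`, whose entries are nonnegative with row sums `1 - n t_a*`:
this is Dobrushin's contraction. Finally `cond` is Lipschitz in L1: the positive part of
`c - d` is controlled coordinatewise by `α_max (b₁ - b₂)⁺` over the smaller normaliser, and both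
normalisers `Σ αᵢ bᵢ` are at least `t_min α_sum`.
-/

open Finset

variable {ι : Type*} [Fintype ι]

theorem sum_abs_eq_two_mul_sum_posPart {e : ι → ℝ} (he : ∑ i, e i = 0) :
    ∑ i, |e i| = 2 * ∑ i, (e i)⁺ := by
  have h : ∑ i, (|e i| + e i) = ∑ i, 2 * (e i)⁺ :=
    sum_congr rfl fun i _ => by rw [abs_add_eq_two_nsmul_posPart, nsmul_eq_mul, Nat.cast_ofNat]
  rwa [sum_add_distrib, he, add_zero, ← mul_sum] at h

theorem card_mul_le_one_of_le {p : ι → ℝ} {t : ℝ} (ht : ∀ i, t ≤ p i) (hp : ∑ i, p i = 1) :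
    Fintype.card ι * t ≤ 1 := by
  have h := card_nsmul_le_sum univ p t fun i _ => ht i
  rwa [nsmul_eq_mul, card_univ, hp] at h

theorem mul_sum_le_sum_mul_of_le {α b : ι → ℝ} {t : ℝ} (hα : ∀ i, 0 ≤ α i) (hb : ∀ i, t ≤ b i) :
    t * ∑ i, α i ≤ ∑ i, α i * b i := by
  rw [mul_sum]
  exact sum_le_sum fun i _ => by rw [mul_comm]; exact mul_le_mul_of_nonneg_left (hb i) (hα i)

section Stochastic

variable {A B P : Matrix ι ι ℝ}

theorem sum_abs_sum_mul_le_of_sum_eq_zero {t : ℝ} (hP : ∀ i j, t ≤ P i j)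
    (hP_rows : ∀ i, ∑ j, P i j = 1) {e : ι → ℝ} (he : ∑ i, e i = 0) :
    ∑ j, |∑ i, P i j * e i| ≤ (1 - Fintype.card ι * t) * ∑ i, |e i| := by
  have hshift : ∀ j, ∑ i, P i j * e i = ∑ i, (P i j - t) * e i := fun j => by
    simp only [sub_mul, sum_sub_distrib, ← mul_sum, he, mul_zero, sub_zero]
  calc ∑ j, |∑ i, P i j * e i| = ∑ j, |∑ i, (P i j - t) * e i| := by simp only [hshift]
    _ ≤ ∑ j, ∑ i, (P i j - t) * |e i| :=
        sum_le_sum fun j _ => (abs_sum_le_sum_abs _ _).trans_eq <|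
          sum_congr rfl fun i _ => by rw [abs_mul, abs_of_nonneg (sub_nonneg.2 (hP i j))]
    _ = ∑ i, (∑ j, (P i j - t)) * |e i| := by rw [sum_comm]; simp only [sum_mul]
    _ = (1 - Fintype.card ι * t) * ∑ i, |e i| := by
        simp only [sum_sub_distrib, hP_rows, sum_const, card_univ, nsmul_eq_mul, mul_sum]

theorem sum_abs_sum_sub_mul_le {M : ℝ} (hM : ∀ i, ∑ j, |A i j - B i j| ≤ M)
    {d : ι → ℝ} (hd : ∀ i, 0 ≤ d i) (hd_sum : ∑ i, d i = 1) :
    ∑ j, |∑ i, (A i j - B i j) * d i| ≤ M :=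
  calc ∑ j, |∑ i, (A i j - B i j) * d i| ≤ ∑ j, ∑ i, |A i j - B i j| * d i :=
        sum_le_sum fun j _ => (abs_sum_le_sum_abs _ _).trans_eq <|
          sum_congr rfl fun i _ => by rw [abs_mul, abs_of_nonneg (hd i)]
    _ = ∑ i, (∑ j, |A i j - B i j|) * d i := by rw [sum_comm]; simp only [sum_mul]
    _ ≤ ∑ i, M * d i := sum_le_sum fun i _ => mul_le_mul_of_nonneg_right (hM i) (hd i)
    _ = M := by rw [← mul_sum, hd_sum, mul_one]

theorem sum_abs_sum_mul_sub_sum_mul_le {t M : ℝ}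
    (hA : ∀ i j, t ≤ A i j) (hA_rows : ∀ i, ∑ j, A i j = 1)
    (hM : ∀ i, ∑ j, |A i j - B i j| ≤ M) {c d : ι → ℝ} (hc_sum : ∑ i, c i = 1)
    (hd : ∀ i, 0 ≤ d i) (hd_sum : ∑ i, d i = 1) :
    ∑ j, |∑ i, A i j * c i - ∑ i, B i j * d i|
      ≤ M + (1 - Fintype.card ι * t) * ∑ i, |c i - d i| := by
  have hsplit : ∀ j, ∑ i, A i j * c i - ∑ i, B i j * d i
      = ∑ i, (A i j - B i j) * d i + ∑ i, A i j * (c i - d i) := fun j => by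
    rw [← sum_sub_distrib, ← sum_add_distrib]
    exact sum_congr rfl fun i _ => by ring
  have hcd : ∑ i, (c i - d i) = 0 := by rw [sum_sub_distrib, hc_sum, hd_sum, sub_self]
  calc ∑ j, |∑ i, A i j * c i - ∑ i, B i j * d i|
      ≤ ∑ j, (|∑ i, (A i j - B i j) * d i| + |∑ i, A i j * (c i - d i)|) :=
        sum_le_sum fun j _ => by rw [hsplit]; exact abs_add_le _ _
    _ ≤ M + (1 - Fintype.card ι * t) * ∑ i, |c i - d i| := by
        rw [sum_add_distrib]
        exact add_le_add (sum_abs_sum_sub_mul_le hM hd hd_sum)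
          (sum_abs_sum_mul_le_of_sum_eq_zero hA hA_rows hcd)

theorem sum_abs_sum_mul_sub_sum_mul_le_max {a b M : ℝ}
    (hA : ∀ i j, a ≤ A i j) (hA_rows : ∀ i, ∑ j, A i j = 1)
    (hB : ∀ i j, b ≤ B i j) (hB_rows : ∀ i, ∑ j, B i j = 1)
    (hM : ∀ i, ∑ j, |A i j - B i j| ≤ M) {c d : ι → ℝ}
    (hc : ∀ i, 0 ≤ c i) (hc_sum : ∑ i, c i = 1) (hd : ∀ i, 0 ≤ d i) (hd_sum : ∑ i, d i = 1) :
    ∑ j, |∑ i, A i j * c i - ∑ i, B i j * d i|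
      ≤ M + (1 - Fintype.card ι * max a b) * ∑ i, |c i - d i| := by
  rcases le_total b a with hba | hab
  · rw [max_eq_left hba]
    exact sum_abs_sum_mul_sub_sum_mul_le hA hA_rows hM hc_sum hd hd_sum
  · rw [max_eq_right hab]
    have hM' : ∀ i, ∑ j, |B i j - A i j| ≤ M := fun i => by simpa only [abs_sub_comm] using hM i
    simpa only [abs_sub_comm] using
      sum_abs_sum_mul_sub_sum_mul_le hB hB_rows hM' hd_sum hc hc_sum

end Stochastic

section Reweight

variable {α b₁ b₂ : ι → ℝ}

/-- The map `cond` of the statement. -/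
noncomputable def reweight (α b : ι → ℝ) (i : ι) : ℝ := α i * b i / ∑ k, α k * b k

theorem reweight_nonneg {b : ι → ℝ} (hα : ∀ i, 0 ≤ α i) (hb : ∀ i, 0 ≤ b i) (i : ι) :
    0 ≤ reweight α b i :=
  div_nonneg (mul_nonneg (hα i) (hb i)) (sum_nonneg fun k _ => mul_nonneg (hα k) (hb k))

theorem sum_reweight {b : ι → ℝ} (h : ∑ k, α k * b k ≠ 0) : ∑ i, reweight α b i = 1 := by
  simp only [reweight, ← sum_div, div_self h]

theorem sum_abs_reweight_sub_le_of_le {a : ℝ} (hα : ∀ i, 0 ≤ α i) (hαa : ∀ i, α i ≤ a)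
    (hb₁ : ∀ i, 0 ≤ b₁ i) (hb₁_sum : ∑ i, b₁ i = 1) (hb₂_sum : ∑ i, b₂ i = 1)
    (hS₂ : 0 < ∑ k, α k * b₂ k) (hS : ∑ k, α k * b₂ k ≤ ∑ k, α k * b₁ k) :
    ∑ i, |reweight α b₁ i - reweight α b₂ i| ≤ a * (∑ i, |b₁ i - b₂ i|) / ∑ k, α k * b₂ k := by
  set S₂ := ∑ k, α k * b₂ k
  have hpos : ∀ i, (reweight α b₁ i - reweight α b₂ i)⁺ ≤ a * (b₁ i - b₂ i)⁺ / S₂ := fun i => by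
    rw [posPart_def]
    refine sup_le ?_ (div_nonneg (mul_nonneg ((hα i).trans (hαa i)) (posPart_nonneg _)) hS₂.le)
    calc reweight α b₁ i - reweight α b₂ i ≤ α i * b₁ i / S₂ - α i * b₂ i / S₂ :=
          sub_le_sub_right (div_le_div_of_nonneg_left (mul_nonneg (hα i) (hb₁ i)) hS₂ hS) _
      _ = α i * (b₁ i - b₂ i) / S₂ := by ring
      _ ≤ a * (b₁ i - b₂ i)⁺ / S₂ := by
          refine div_le_div_of_nonneg_right ?_ hS₂.le
          exact (mul_le_mul_of_nonneg_left (le_posPart _) (hα i)).trans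
            (mul_le_mul_of_nonneg_right (hαa i) (posPart_nonneg _))
  have hrw : ∑ i, (reweight α b₁ i - reweight α b₂ i) = 0 := by
    rw [sum_sub_distrib, sum_reweight (hS₂.trans_le hS).ne', sum_reweight hS₂.ne', sub_self]
  have hb : ∑ i, (b₁ i - b₂ i) = 0 := by rw [sum_sub_distrib, hb₁_sum, hb₂_sum, sub_self]
  calc ∑ i, |reweight α b₁ i - reweight α b₂ i|
      = 2 * ∑ i, (reweight α b₁ i - reweight α b₂ i)⁺ := sum_abs_eq_two_mul_sum_posPart hrw
    _ ≤ 2 * ∑ i, a * (b₁ i - b₂ i)⁺ / S₂ := by gcongr with i; exact hpos i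
    _ = a * (∑ i, |b₁ i - b₂ i|) / S₂ := by
        rw [sum_abs_eq_two_mul_sum_posPart hb, ← sum_div, ← mul_sum]; ring

theorem sum_abs_reweight_sub_le {a S : ℝ} (hα : ∀ i, 0 ≤ α i) (hαa : ∀ i, α i ≤ a)
    (hb₁ : ∀ i, 0 ≤ b₁ i) (hb₁_sum : ∑ i, b₁ i = 1) (hb₂ : ∀ i, 0 ≤ b₂ i)
    (hb₂_sum : ∑ i, b₂ i = 1) (hS : 0 < S) (hS₁ : S ≤ ∑ k, α k * b₁ k)
    (hS₂ : S ≤ ∑ k, α k * b₂ k) :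
    ∑ i, |reweight α b₁ i - reweight α b₂ i| ≤ a * (∑ i, |b₁ i - b₂ i|) / S := by
  obtain ⟨i₀, -⟩ := nonempty_of_sum_ne_zero (hb₁_sum ▸ one_ne_zero : ∑ i, b₁ i ≠ 0)
  have hD : 0 ≤ a * ∑ i, |b₁ i - b₂ i| :=
    mul_nonneg ((hα i₀).trans (hαa i₀)) (sum_nonneg fun i _ => abs_nonneg _)
  rcases le_total (∑ k, α k * b₂ k) (∑ k, α k * b₁ k) with h | h
  · calc _ ≤ a * (∑ i, |b₁ i - b₂ i|) / ∑ k, α k * b₂ k :=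
          sum_abs_reweight_sub_le_of_le hα hαa hb₁ hb₁_sum hb₂_sum (hS.trans_le hS₂) h
      _ ≤ a * (∑ i, |b₁ i - b₂ i|) / S := div_le_div_of_nonneg_left hD hS hS₂
  · calc _ ≤ a * (∑ i, |b₁ i - b₂ i|) / ∑ k, α k * b₁ k := by
          simpa only [abs_sub_comm] using
            sum_abs_reweight_sub_le_of_le hα hαa hb₂ hb₂_sum hb₁_sum (hS.trans_le hS₁) h
      _ ≤ a * (∑ i, |b₁ i - b₂ i|) / S := div_le_div_of_nonneg_left hD hS hS₁

end Reweight

/-- Bound on the distance between belief updates τ_A(b₁) = T_Aᵀ·cond(b₁) and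
τ_D(b₂) = T_Dᵀ·cond(b₂) under actual and design transition matrices. -/
theorem tauA_tauD_discrepancy_bound
    (n : ℕ) [NeZero n] (TA TD : Matrix (Fin n) (Fin n) ℝ)
    (ta td : ℝ) (hta : 0 < ta) (htd : 0 < td)
    (hTA_entries : ∀ i j, ta ≤ TA i j) (hTA_rows : ∀ i, ∑ j, TA i j = 1)
    (hTD_entries : ∀ i j, td ≤ TD i j) (hTD_rows : ∀ i, ∑ j, TD i j = 1)
    (α : Fin n → ℝ) (hα : ∀ j, 0 ≤ α j)
    (αsum αmax : ℝ)
    (hαsum : αsum = ∑ j, α j) (hαsum_pos : 0 < αsum)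
    (hαmax : αmax = Finset.univ.sup' Finset.univ_nonempty α)
    (b₁ b₂ : Fin n → ℝ)
    (hb₁_lb : ∀ i, ta ≤ b₁ i) (hb₁_sum : ∑ i, b₁ i = 1)
    (hb₂_lb : ∀ i, td ≤ b₂ i) (hb₂_sum : ∑ i, b₂ i = 1) :
    ∑ j, |(∑ i, TA i j * (α i * b₁ i / (∑ k, α k * b₁ k)))
          - (∑ i, TD i j * (α i * b₂ i / (∑ k, α k * b₂ k)))|
      ≤ Finset.univ.sup' Finset.univ_nonempty (fun j => ∑ i, |TA j i - TD j i|)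
        + ((1 - (n : ℝ) * max ta td) * αmax / (min ta td * αsum))
            * ∑ j, |b₁ j - b₂ j| := by
  have hb₁ : ∀ i, 0 ≤ b₁ i := fun i => hta.le.trans (hb₁_lb i)
  have hb₂ : ∀ i, 0 ≤ b₂ i := fun i => htd.le.trans (hb₂_lb i)
  have hαa : ∀ j, α j ≤ αmax := fun j => hαmax ▸ le_sup' α (mem_univ j)
  have hS : 0 < min ta td * αsum := mul_pos (lt_min hta htd) hαsum_pos
  have hS₁ : min ta td * αsum ≤ ∑ k, α k * b₁ k :=
    (mul_le_mul_of_nonneg_right (min_le_left _ _) hαsum_pos.le).trans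
      (hαsum ▸ mul_sum_le_sum_mul_of_le hα hb₁_lb)
  have hS₂ : min ta td * αsum ≤ ∑ k, α k * b₂ k :=
    (mul_le_mul_of_nonneg_right (min_le_right _ _) hαsum_pos.le).trans
      (hαsum ▸ mul_sum_le_sum_mul_of_le hα hb₂_lb)
  have hcontract : 0 ≤ 1 - (n : ℝ) * max ta td := by
    have h := max_le (card_mul_le_one_of_le (hTA_entries 0) (hTA_rows 0))
      (card_mul_le_one_of_le (hTD_entries 0) (hTD_rows 0))
    rw [← mul_max_of_nonneg _ _ (Nat.cast_nonneg _), Fintype.card_fin] at h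
    linarith
  have hM : ∀ i, ∑ j, |TA i j - TD i j|
      ≤ univ.sup' univ_nonempty (fun j => ∑ i, |TA j i - TD j i|) := fun i =>
    le_sup' (fun j => ∑ i, |TA j i - TD j i|) (mem_univ i)
  have hstep := sum_abs_sum_mul_sub_sum_mul_le_max hTA_entries hTA_rows hTD_entries hTD_rows hM
    (reweight_nonneg hα hb₁) (sum_reweight (hS.trans_le hS₁).ne')
    (reweight_nonneg hα hb₂) (sum_reweight (hS.trans_le hS₂).ne')
  rw [Fintype.card_fin] at hstep
  have hcond := sum_abs_reweight_sub_le hα hαa hb₁ hb₁_sum hb₂ hb₂_sum hS hS₁ hS₂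
  calc _ ≤ _ := hstep
    _ ≤ _ + (1 - (n : ℝ) * max ta td) * (αmax * (∑ j, |b₁ j - b₂ j|) / (min ta td * αsum)) := by
        gcongr
    _ = _ := by ring
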